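/- In an Archimedean idempotent b-space V, every family of nonzero wo-closed subspaces that is linearly ordered by inclusion has nonzero intersection. -/

import Mathlib

/-- An idempotent commutative semigroup. -/
structure IdemSemigroup (S : Type*) where
  add : S → S → S
  add_comm : ∀ x y, add x y = add y x
  add_assoc : ∀ x y z, add (add x y) z = add x (add y z)
  add_idem : ∀ x, add x x = x

namespace IdemSemigroup
variable {S : Type*}

/-- The canonical order: x ≼ y iff x ⊕ y = y. -/
def le (A : IdemSemigroup S) (x y : S) : Prop := A.add x y = y
def UB (A : IdemSemigroup S) (X : Set S) (b : S) : Prop := ∀ x ∈ X, A.le x b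
def LB (A : IdemSemigroup S) (X : Set S) (b : S) : Prop := ∀ x ∈ X, A.le b x
def IsSup (A : IdemSemigroup S) (X : Set S) (s : S) : Prop :=
  A.UB X s ∧ ∀ b, A.UB X b → A.le s b
def IsInf (A : IdemSemigroup S) (X : Set S) (s : S) : Prop :=
  A.LB X s ∧ ∀ b, A.LB X b → A.le b s
/-- b-completeness: every subset bounded above (including ∅) has a least upper bound. -/
def BComplete (A : IdemSemigroup S) : Prop :=
  ∀ X : Set S, (∃ b, A.UB X b) → ∃ s, A.IsSup X s
/-- Linearly ordered subset. -/
def Chain (A : IdemSemigroup S) (X : Set S) : Prop :=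
  ∀ x ∈ X, ∀ y ∈ X, A.le x y ∨ A.le y x

end IdemSemigroup

/-- An idempotent semifield: idempotent semiring with all nonzero elements invertible. -/
structure IdemSemifield (K : Type*) extends IdemSemigroup K where
  mul : K → K → K
  one : K
  zero : K
  mul_assoc : ∀ x y z, mul (mul x y) z = mul x (mul y z)
  one_mul : ∀ x, mul one x = x
  mul_one : ∀ x, mul x one = x
  zero_add : ∀ x, add zero x = x
  zero_mul : ∀ x, mul zero x = zero
  mul_zero : ∀ x, mul x zero = zero
  left_distrib : ∀ x y z, mul x (add y z) = add (mul x y) (mul x z)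
  right_distrib : ∀ x y z, mul (add x y) z = add (mul x z) (mul y z)
  inv_exists : ∀ x, x ≠ zero → ∃ y, mul x y = one ∧ mul y x = one

namespace IdemSemifield
variable {K : Type*}
def BComplete (F : IdemSemifield K) : Prop := F.toIdemSemigroup.BComplete
def pow (F : IdemSemifield K) (x : K) : ℕ → K
  | 0 => F.one
  | n + 1 => F.mul x (F.pow x n)
/-- Algebraically closed: n-th roots exist. -/
def AlgClosed (F : IdemSemifield K) : Prop :=
  ∀ x : K, ∀ n : ℕ, 0 < n → ∃ y, F.pow y n = x
end IdemSemifield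

/-- An idempotent semimodule over an idempotent semifield. -/
structure IdemSemimodule {K : Type*} (F : IdemSemifield K) (V : Type*) extends
    IdemSemigroup V where
  smul : K → V → V
  zero : V
  zero_add : ∀ x, add zero x = x
  smul_smul : ∀ a b x, smul a (smul b x) = smul (F.mul a b) x
  add_smul : ∀ a b x, smul (F.add a b) x = add (smul a x) (smul b x)
  smul_add : ∀ a x y, smul a (add x y) = add (smul a x) (smul a y)
  zero_smul : ∀ x, smul F.zero x = zero
  one_smul : ∀ x, smul F.one x = x

/-- An idempotent b-space: b-complete semimodule, scalar multiplication compatible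
with bounded sups and infs of scalars. -/
structure IdemBSpace {K : Type*} (F : IdemSemifield K) (V : Type*) extends
    IdemSemimodule F V where
  bcomplete : toIdemSemigroup.BComplete
  smul_sup : ∀ (Q : Set K) (x : V) (s : K), Q.Nonempty →
    F.toIdemSemigroup.IsSup Q s →
    toIdemSemigroup.IsSup ((fun a => smul a x) '' Q) (smul s x)
  smul_inf : ∀ (Q : Set K) (x : V) (s : K), Q.Nonempty →
    (∃ b, F.toIdemSemigroup.UB Q b) →
    F.toIdemSemigroup.IsInf Q s →
    toIdemSemigroup.IsInf ((fun a => smul a x) '' Q) (smul s x)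

namespace IdemBSpace
variable {K V : Type*} {F : IdemSemifield K}

def le (B : IdemBSpace F V) (x y : V) : Prop := B.toIdemSemigroup.le x y
def IsSup (B : IdemBSpace F V) (X : Set V) (s : V) : Prop := B.toIdemSemigroup.IsSup X s
def IsInf (B : IdemBSpace F V) (X : Set V) (s : V) : Prop := B.toIdemSemigroup.IsInf X s
def Chain (B : IdemBSpace F V) (X : Set V) : Prop := B.toIdemSemigroup.Chain X

def Subspace (B : IdemBSpace F V) (W : Set V) : Prop :=
  (∀ x ∈ W, ∀ y ∈ W, B.add x y ∈ W) ∧ (∀ (a : K), ∀ x ∈ W, B.smul a x ∈ W)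

/-- wo-closed: sups of bounded linearly ordered subsets and infs of nonempty linearly
ordered subsets (taken in V) belong to the set. -/
def WOClosed (B : IdemBSpace F V) (M : Set V) : Prop :=
  ∀ X ⊆ M, B.Chain X →
    (∀ s, B.IsSup X s → s ∈ M) ∧ (∀ s, X.Nonempty → B.IsInf X s → s ∈ M)

/-- Archimedean element. -/
def ArchElem (B : IdemBSpace F V) (x : V) : Prop :=
  ∀ y, ∃ a : K, B.le y (B.smul a x)

/-- f is the functional x*: x*(y) = inf { k | k ⊙ x ≽ y }. -/
def IsStar (B : IdemBSpace F V) (x : V) (f : V → K) : Prop :=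
  ∀ y, F.toIdemSemigroup.IsInf {k | B.le y (B.smul k x)} (f y)

/-- wo-continuity of the functional f: it preserves sups and infs of bounded
linearly ordered subsets. -/
def WOContStar (B : IdemBSpace F V) (f : V → K) : Prop :=
  (∀ X : Set V, B.Chain X → ∀ s, B.IsSup X s → F.toIdemSemigroup.IsSup (f '' X) (f s)) ∧
  (∀ X : Set V, B.Chain X → X.Nonempty → ∀ s, B.IsInf X s →
    F.toIdemSemigroup.IsInf (f '' X) (f s))

/-- wo-continuous element: its star functional is wo-continuous. -/
def WOContElem (B : IdemBSpace F V) (x : V) : Prop :=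
  ∃ f, B.IsStar x f ∧ B.WOContStar f

/-- Archimedean space: contains a wo-continuous Archimedean element. -/
def ArchSpace (B : IdemBSpace F V) : Prop :=
  ∃ x, B.ArchElem x ∧ B.WOContElem x

/-- The subspace W, with the induced structure, is an Archimedean space. -/
def ArchOn (B : IdemBSpace F V) (W : Set V) : Prop :=
  ∃ x ∈ W, (∀ y ∈ W, ∃ a : K, B.le y (B.smul a x)) ∧
    ∃ f : V → K,
      (∀ y ∈ W, F.toIdemSemigroup.IsInf {k | B.le y (B.smul k x)} (f y)) ∧
      (∀ X ⊆ W, B.Chain X → ∀ s ∈ W, B.IsSup X s →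
        F.toIdemSemigroup.IsSup (f '' X) (f s)) ∧
      (∀ X ⊆ W, B.Chain X → X.Nonempty → ∀ s ∈ W, B.IsInf X s →
        F.toIdemSemigroup.IsInf (f '' X) (f s))

/-- b-linear map of the space into itself. -/
def BLinearMap (B : IdemBSpace F V) (g : V → V) : Prop :=
  (∀ x y, g (B.add x y) = B.add (g x) (g y)) ∧
  (∀ (a : K) x, g (B.smul a x) = B.smul a (g x)) ∧
  (∀ (X : Set V) s, B.IsSup X s → B.IsSup (g '' X) (g s))

/-- b-linear functional. -/
def BLinearFun (B : IdemBSpace F V) (f : V → K) : Prop :=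
  (∀ x y, f (B.add x y) = F.add (f x) (f y)) ∧
  (∀ (a : K) x, f (B.smul a x) = F.mul a (f x)) ∧
  (∀ (X : Set V) s, B.IsSup X s → F.toIdemSemigroup.IsSup (f '' X) (f s))

/-- ∧-subspace: closed under scalar multiplication and infima of nonempty subsets. -/
def WedgeSub (B : IdemBSpace F V) (W : Set V) : Prop :=
  (∀ (a : K), ∀ x ∈ W, B.smul a x ∈ W) ∧
  (∀ X ⊆ W, X.Nonempty → ∃ s ∈ W, (∀ x ∈ X, B.le s x) ∧
    ∀ b ∈ W, (∀ x ∈ X, B.le b x) → B.le b s)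

end IdemBSpace

/-- Bounded upper semicontinuous maps X → K. -/
def USCset {K : Type*} (F : IdemSemifield K) (X : Type*) [TopologicalSpace X] :
    Set (X → K) :=
  {f | (∃ b, ∀ t, F.toIdemSemigroup.le (f t) b) ∧
    ∀ b, IsClosed {t | F.toIdemSemigroup.le b (f t)}}

/-!
Let `x` be a wo-continuous Archimedean element with star functional `f = x*`. In each `W ∈ 𝒮`
the projection `v W = sup {y ∈ W | y ≼ x}` exists (sup of a maximal chain, which stays in `W`
by wo-closedness) and satisfies `f (v W) ≽ 1`, because a nonzero `w ∈ W` rescaled by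
`(x* w)⁻¹` lies below `x` and has `x*`-value `≽ 1`. The projections shrink with `W`, so along
the chain `𝒮` their infimum `z` is also the infimum of the projections onto the members inside
any given `W`, hence `z ∈ W`; wo-continuity of `f` gives `f z ≽ 1`, so `z ≠ 𝟘`.
-/

namespace IdemSemigroup

variable {S : Type*} (A : IdemSemigroup S)

protected theorem le_refl (x : S) : A.le x x := A.add_idem x

protected theorem le_trans {x y z : S} (hxy : A.le x y) (hyz : A.le y z) : A.le x z := by
  unfold le at *
  rw [← hyz, ← A.add_assoc, hxy]

protected theorem le_antisymm {x y : S} (hxy : A.le x y) (hyx : A.le y x) : x = y := by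
  unfold le at *
  rw [← hxy, A.add_comm x y]
  exact hyx.symm

theorem le_add_left (x y : S) : A.le x (A.add x y) := by
  unfold le
  rw [← A.add_assoc, A.add_idem]

theorem le_add_right (x y : S) : A.le y (A.add x y) := by
  unfold le
  rw [A.add_comm x y, ← A.add_assoc, A.add_idem]

theorem add_le {x y z : S} (hxz : A.le x z) (hyz : A.le y z) : A.le (A.add x y) z := by
  unfold le at *
  rw [A.add_assoc, hyz, hxz]

theorem exists_isInf (hA : A.BComplete) {X : Set S} (hX : X.Nonempty) : ∃ s, A.IsInf X s := by
  obtain ⟨x, hx⟩ := hX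
  obtain ⟨s, hs⟩ := hA {b | A.LB X b} ⟨x, fun b hb => hb x hx⟩
  exact ⟨s, fun y hy => hs.2 y fun b hb => hb y hy, fun b hb => hs.1 b hb⟩

theorem isSup_le_isSup {X Y : Set S} {s t : S} (hs : A.IsSup X s) (ht : A.IsSup Y t)
    (hXY : X ⊆ Y) : A.le s t :=
  hs.2 t fun x hx => ht.1 x (hXY hx)

theorem isInf_of_subset_of_forall_exists_le {X Y : Set S} {s : S} (hYX : Y ⊆ X)
    (hY : ∀ x ∈ X, ∃ y ∈ Y, A.le y x) (hs : A.IsInf X s) : A.IsInf Y s :=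
  ⟨fun y hy => hs.1 y (hYX hy), fun b hb => hs.2 b fun x hx =>
    let ⟨y, hy, hyx⟩ := hY x hx
    A.le_trans (hb y hy) hyx⟩

theorem chain_of_subset {X Y : Set S} (hX : A.Chain X) (hYX : Y ⊆ X) : A.Chain Y :=
  fun x hx y hy => hX x (hYX hx) y (hYX hy)

theorem chain_insert {C : Set S} {b : S} (hC : A.Chain C) (hb : A.UB C b) :
    A.Chain (insert b C) := by
  rintro x (rfl | hx) y (rfl | hy)
  · exact Or.inl (A.le_refl _)
  · exact Or.inr (hb y hy)
  · exact Or.inl (hb x hx)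
  · exact hC x hx y hy

theorem chain_image {ι : Type*} {r : ι → ι → Prop} {I : Set ι} {v : ι → S}
    (hI : ∀ i ∈ I, ∀ j ∈ I, r i j ∨ r j i) (hv : ∀ i ∈ I, ∀ j ∈ I, r i j → A.le (v i) (v j)) :
    A.Chain (v '' I) := by
  rintro _ ⟨i, hi, rfl⟩ _ ⟨j, hj, rfl⟩
  exact (hI i hi j hj).imp (hv i hi j hj) (hv j hj i hi)

end IdemSemigroup

namespace IdemSemifield

variable {K : Type*} (F : IdemSemifield K)

theorem zero_le (a : K) : F.le F.zero a := F.zero_add a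

theorem mul_le_mul_left (c : K) {a b : K} (h : F.le a b) : F.le (F.mul c a) (F.mul c b) := by
  unfold IdemSemigroup.le at *
  rw [← F.left_distrib, h]

end IdemSemifield

namespace IdemBSpace

variable {K V : Type*} {F : IdemSemifield K} (B : IdemBSpace F V)

theorem eq_zero_of_le_zero {y : V} (h : B.le y B.zero) : y = B.zero := by
  have hy : B.add B.zero y = y := B.zero_add y
  rw [← hy, B.add_comm]
  exact h

theorem smul_le_smul (a : K) {y z : V} (h : B.le y z) : B.le (B.smul a y) (B.smul a z) := by
  unfold IdemBSpace.le IdemSemigroup.le at *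
  rw [← B.smul_add, h]

theorem one_ne_zero_of_ne_zero {w : V} (hw : w ≠ B.zero) : F.one ≠ F.zero := by
  intro h
  rw [← B.one_smul w, h, B.zero_smul] at hw
  exact hw rfl

theorem exists_mem_isSup_of_woClosed {W : Set V} (hadd : ∀ y ∈ W, ∀ z ∈ W, B.add y z ∈ W)
    (hW : B.WOClosed W) (x : V) : ∃ s ∈ W, B.IsSup {y | y ∈ W ∧ B.le y x} s := by
  set D : Set V := {y | y ∈ W ∧ B.le y x}
  obtain ⟨C, ⟨hCD, hC⟩, hCmax⟩ := zorn_subset {C | C ⊆ D ∧ B.Chain C} <| by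
    intro 𝒞 h𝒞 h𝒞chain
    refine ⟨⋃₀ 𝒞, ⟨Set.sUnion_subset fun C hC => (h𝒞 hC).1, ?_⟩,
      fun C hC => Set.subset_sUnion_of_mem hC⟩
    rintro y ⟨C₁, hC₁, hy⟩ z ⟨C₂, hC₂, hz⟩
    rcases h𝒞chain.total hC₁ hC₂ with h | h
    · exact (h𝒞 hC₂).2 y (h hy) z hz
    · exact (h𝒞 hC₁).2 y hy z (h hz)
  obtain ⟨s, hs⟩ := B.bcomplete C ⟨x, fun y hy => (hCD hy).2⟩
  have hsW : s ∈ W := (hW C (fun y hy => (hCD hy).1) hC).1 s hs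
  have hsx : B.le s x := hs.2 x fun y hy => (hCD hy).2
  refine ⟨s, hsW, fun d hd => ?_, fun b hb => hs.2 b fun y hy => hb y (hCD hy)⟩
  -- `s ⊕ d` extends the maximal chain `C`, so it already belongs to `C`.
  have hsd : B.add s d ∈ C := by
    refine hCmax ⟨Set.insert_subset ⟨hadd s hsW d hd.1, B.add_le hsx hd.2⟩ hCD, ?_⟩
      (Set.subset_insert _ _) (Set.mem_insert _ _)
    exact B.chain_insert hC fun y hy => B.le_trans (hs.1 y hy) (B.le_add_left s d)
  exact B.le_trans (B.le_add_right s d) (hs.1 _ hsd)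

theorem mem_of_isInf_image {𝒮 : Set (Set V)} {v : Set V → V} {z : V}
    (h𝒮 : ∀ W ∈ 𝒮, ∀ U ∈ 𝒮, W ⊆ U ∨ U ⊆ W) (hwo : ∀ W ∈ 𝒮, B.WOClosed W)
    (hv : ∀ W ∈ 𝒮, v W ∈ W) (hvmono : ∀ W ∈ 𝒮, ∀ U ∈ 𝒮, W ⊆ U → B.le (v W) (v U))
    (hz : B.IsInf (v '' 𝒮) z) {W : Set V} (hW : W ∈ 𝒮) : z ∈ W := by
  set Y := v '' {U | U ∈ 𝒮 ∧ U ⊆ W}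
  have hYsub : Y ⊆ v '' 𝒮 := Set.image_mono fun U hU => hU.1
  have hYW : Y ⊆ W := by
    rintro _ ⟨U, ⟨hU, hUW⟩, rfl⟩
    exact hUW (hv U hU)
  have hWY : v W ∈ Y := ⟨W, ⟨hW, subset_rfl⟩, rfl⟩
  have hzY : B.IsInf Y z := by
    refine B.isInf_of_subset_of_forall_exists_le hYsub ?_ hz
    rintro _ ⟨U, hU, rfl⟩
    rcases h𝒮 U hU W hW with hUW | hWU
    · exact ⟨v U, ⟨U, ⟨hU, hUW⟩, rfl⟩, B.le_refl _⟩
    · exact ⟨v W, hWY, hvmono W hW U hU hWU⟩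
  have hY : B.Chain Y := B.chain_of_subset (B.chain_image h𝒮 hvmono) hYsub
  exact (hwo W hW Y hYW hY).2 z ⟨v W, hWY⟩ hzY

section Star

variable {B} {x : V} {f : V → K} (hf : B.IsStar x f)
include hf

theorem star_mono {y z : V} (h : B.le y z) : F.le (f y) (f z) :=
  (hf z).2 (f y) fun k hk => (hf y).1 k (B.le_trans h hk)

theorem star_zero_le : F.le (f B.zero) F.zero :=
  (hf B.zero).1 F.zero <| by
    show B.le B.zero (B.smul F.zero x)
    rw [B.zero_smul]
    exact B.le_refl _

theorem ne_zero_of_one_le_star (h10 : F.one ≠ F.zero) {z : V} (hz : F.le F.one (f z)) :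
    z ≠ B.zero := by
  rintro rfl
  exact h10 (F.le_antisymm (F.le_trans hz (star_zero_le hf)) (F.zero_le F.one))

theorem le_smul_star (hF : F.BComplete) {y : V} {k₀ : K} (hk₀ : B.le y (B.smul k₀ x)) :
    B.le y (B.smul (f y) x) := by
  set Q : Set K := {k | B.le y (B.smul k x)}
  have hQ : ∀ k ∈ Q, ∃ m ∈ Q, F.le m k ∧ F.le m k₀ := by
    intro k hk
    obtain ⟨m, hm⟩ := F.exists_isInf hF (X := {k, k₀}) ⟨k, Or.inl rfl⟩
    have hbdd : ∃ b, F.UB {k, k₀} b :=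
      ⟨F.add k k₀, by rintro q (rfl | rfl); exacts [F.le_add_left q k₀, F.le_add_right k q]⟩
    refine ⟨m, ?_, hm.1 k (Or.inl rfl), hm.1 k₀ (Or.inr rfl)⟩
    refine (B.smul_inf {k, k₀} x m ⟨k, Or.inl rfl⟩ hbdd hm).2 y ?_
    rintro _ ⟨q, (rfl | rfl), rfl⟩
    exacts [hk, hk₀]
  -- Cutting `Q` below `k₀` keeps its infimum and makes it bounded, as `smul_inf` requires.
  have hinf : F.IsInf {k | k ∈ Q ∧ F.le k k₀} (f y) :=
    F.isInf_of_subset_of_forall_exists_le (fun k hk => hk.1)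
      (fun k hk => let ⟨m, hmQ, hmk, hmk₀⟩ := hQ k hk; ⟨m, ⟨hmQ, hmk₀⟩, hmk⟩) (hf y)
  refine (B.smul_inf {k | k ∈ Q ∧ F.le k k₀} x (f y) ⟨k₀, hk₀, F.le_refl k₀⟩
    ⟨k₀, fun _ hk => hk.2⟩ hinf).2 y ?_
  rintro _ ⟨k, hk, rfl⟩
  exact hk.1

theorem one_le_star_smul_inv {y : V} {c : K} (hyc : F.mul (f y) c = F.one)
    (hcy : F.mul c (f y) = F.one) : F.le F.one (f (B.smul c y)) := by
  refine (hf _).2 F.one fun k hk => ?_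
  have hy : B.le y (B.smul (F.mul (f y) k) x) := by
    have h := B.smul_le_smul (f y) hk
    rwa [B.smul_smul, hyc, B.one_smul, B.smul_smul] at h
  have h := F.mul_le_mul_left c ((hf y).1 _ hy)
  rwa [← F.mul_assoc, hcy, F.one_mul] at h

theorem exists_mem_le_one_le_star (hF : F.BComplete) {W : Set V}
    (hsmul : ∀ (a : K), ∀ y ∈ W, B.smul a y ∈ W) {w : V} (hwW : w ∈ W) (hw : w ≠ B.zero)
    {k : K} (hk : B.le w (B.smul k x)) : ∃ y ∈ W, B.le y x ∧ F.le F.one (f y) := by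
  have hwx := le_smul_star hf hF hk
  have hfw : f w ≠ F.zero := by
    intro h
    rw [h, B.zero_smul] at hwx
    exact hw (B.eq_zero_of_le_zero hwx)
  obtain ⟨c, hwc, hcw⟩ := F.inv_exists (f w) hfw
  refine ⟨B.smul c w, hsmul c w hwW, ?_, one_le_star_smul_inv hf hwc hcw⟩
  have h := B.smul_le_smul c hwx
  rwa [B.smul_smul, hcw, B.one_smul] at h

theorem one_le_star_of_isSup (hF : F.BComplete) (hx : B.ArchElem x) {W : Set V}
    (hsmul : ∀ (a : K), ∀ y ∈ W, B.smul a y ∈ W) {w : V} (hwW : w ∈ W) (hw : w ≠ B.zero)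
    {s : V} (hs : B.IsSup {y | y ∈ W ∧ B.le y x} s) : F.le F.one (f s) := by
  obtain ⟨k, hk⟩ := hx w
  obtain ⟨y, hyW, hyx, hy⟩ := exists_mem_le_one_le_star hf hF hsmul hwW hw hk
  exact F.le_trans hy (star_mono hf (hs.1 y ⟨hyW, hyx⟩))

end Star

end IdemBSpace

/-- In an Archimedean idempotent b-space, a nonempty family of nonzero wo-closed
subspaces linearly ordered by inclusion has nonzero intersection. -/
theorem stmt10 {K V : Type*} (F : IdemSemifield K) (hF : F.BComplete)
    (B : IdemBSpace F V) (hA : B.ArchSpace)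
    (𝒮 : Set (Set V)) (hne : 𝒮.Nonempty)
    (hmem : ∀ W ∈ 𝒮, B.Subspace W ∧ B.WOClosed W ∧ ∃ v ∈ W, v ≠ B.zero)
    (hchain : ∀ W ∈ 𝒮, ∀ U ∈ 𝒮, W ⊆ U ∨ U ⊆ W) :
    ∃ v, v ≠ B.zero ∧ ∀ W ∈ 𝒮, v ∈ W := by
  obtain ⟨x, harch, f, hf, -, hfinf⟩ := hA
  have hproj : ∀ W ∈ 𝒮, ∃ s ∈ W, B.IsSup {y | y ∈ W ∧ B.le y x} s := fun W hW =>
    B.exists_mem_isSup_of_woClosed (hmem W hW).1.1 (hmem W hW).2.1 x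
  have : Nonempty V := ⟨B.zero⟩
  choose! v hvW hv using hproj
  have hvmono : ∀ W ∈ 𝒮, ∀ U ∈ 𝒮, W ⊆ U → B.le (v W) (v U) := fun W hW U hU hWU =>
    B.isSup_le_isSup (hv W hW) (hv U hU) fun y hy => ⟨hWU hy.1, hy.2⟩
  obtain ⟨W₀, hW₀⟩ := hne
  obtain ⟨z, hz⟩ := B.exists_isInf B.bcomplete (X := v '' 𝒮) ⟨v W₀, W₀, hW₀, rfl⟩
  have hfz : F.le F.one (f z) := by
    refine (hfinf (v '' 𝒮) (B.chain_image hchain hvmono) ⟨v W₀, W₀, hW₀, rfl⟩ z hz).2 F.one ?_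
    rintro _ ⟨_, ⟨W, hW, rfl⟩, rfl⟩
    obtain ⟨w, hwW, hw⟩ := (hmem W hW).2.2
    exact B.one_le_star_of_isSup hf hF harch (hmem W hW).1.2 hwW hw (hv W hW)
  obtain ⟨w, -, hw⟩ := (hmem W₀ hW₀).2.2
  exact ⟨z, B.ne_zero_of_one_le_star hf (B.one_ne_zero_of_ne_zero hw) hfz,
    fun W hW => B.mem_of_isInf_image hchain (fun W hW => (hmem W hW).2.1) hvW hvmono hz hW⟩
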